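/- Let g(x) = x - log(1 + x + x²/2) for x ≥ 0 and g(x) = x + log(1 - x + x²/2) for x ≤ 0. Then for all x ∈ ℝ, |g(x)| ≤ min{|x|, x²/(4(1+√2)), |x|³/6}. -/

import Mathlib

/-!
On `x ≥ 0` the function is `x - log (1 + x + x²/2)`, which vanishes at `0` and has derivative
`(x²/2) / (1 + x + x²/2)`. This derivative is nonnegative, at most `x²/2`, and at most
`x / (2(1 + √2))` because `1 + x + x²/2 ≥ (1 + √2) x` by AM-GM; integrating gives the lower bound
`0` and the cubic and quadratic upper bounds, while `x` bounds it since the logarithm is nonnegative.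
For `x ≤ 0` the function is odd-symmetric to the case `-x ≥ 0`.
-/

open Real

noncomputable def gFun (x : ℝ) : ℝ :=
  if 0 ≤ x then x - Real.log (1 + x + x ^ 2 / 2)
  else x + Real.log (1 - x + x ^ 2 / 2)

lemma le_of_hasDerivAt_le_of_nonneg {f f' B B' : ℝ → ℝ} (hf : ∀ x, HasDerivAt f (f' x) x)
    (hB : ∀ x, HasDerivAt B (B' x) x) (h0 : f 0 ≤ B 0) (hle : ∀ x, 0 ≤ x → f' x ≤ B' x)
    {x : ℝ} (hx : 0 ≤ x) : f x ≤ B x :=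
  image_le_of_deriv_right_le_deriv_boundary
    (fun y _ => (hf y).continuousAt.continuousWithinAt) (fun y _ => (hf y).hasDerivWithinAt) h0
    (fun y _ => (hB y).continuousAt.continuousWithinAt) (fun y _ => (hB y).hasDerivWithinAt)
    (fun y hy => hle y hy.1) ⟨hx, le_rfl⟩

lemma one_add_add_sq_div_two_pos (x : ℝ) : 0 < 1 + x + x ^ 2 / 2 := by
  nlinarith [sq_nonneg (x + 1)]

lemma one_add_sqrt_two_mul_le (x : ℝ) : (1 + √2) * x ≤ 1 + x + x ^ 2 / 2 := by
  nlinarith [sq_nonneg (x - √2), sq_sqrt (zero_le_two : (0 : ℝ) ≤ 2)]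

noncomputable def wideGap (x : ℝ) : ℝ := x - log (1 + x + x ^ 2 / 2)

lemma wideGap_zero : wideGap 0 = 0 := by
  simp [wideGap]

lemma hasDerivAt_wideGap (x : ℝ) :
    HasDerivAt wideGap (x ^ 2 / 2 / (1 + x + x ^ 2 / 2)) x := by
  have hD : HasDerivAt (fun y : ℝ => 1 + y + y ^ 2 / 2) (1 + x) x :=
    (((hasDerivAt_id x).const_add 1).add ((hasDerivAt_pow 2 x).div_const 2)).congr_deriv
      (by ring)
  refine ((hasDerivAt_id' x).sub (hD.log (one_add_add_sq_div_two_pos x).ne')).congr_deriv ?_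
  rw [sub_eq_iff_eq_add, ← add_div, eq_div_iff (one_add_add_sq_div_two_pos x).ne']
  ring

lemma wideGap_nonneg {x : ℝ} (hx : 0 ≤ x) : 0 ≤ wideGap x :=
  le_of_hasDerivAt_le_of_nonneg (fun _ => hasDerivAt_const _ _) hasDerivAt_wideGap
    wideGap_zero.ge (fun y _ => div_nonneg (by positivity) (one_add_add_sq_div_two_pos y).le) hx

lemma wideGap_le_self {x : ℝ} (hx : 0 ≤ x) : wideGap x ≤ x := by
  have : 0 ≤ log (1 + x + x ^ 2 / 2) := log_nonneg (by nlinarith)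
  rw [wideGap]
  linarith

lemma wideGap_le_sq {x : ℝ} (hx : 0 ≤ x) : wideGap x ≤ x ^ 2 / (4 * (1 + √2)) := by
  have hB (y : ℝ) : HasDerivAt (fun y : ℝ => y ^ 2 / (4 * (1 + √2))) (y / (2 * (1 + √2))) y := by
    refine ((hasDerivAt_pow 2 y).div_const (4 * (1 + √2))).congr_deriv ?_
    field_simp
    ring
  refine le_of_hasDerivAt_le_of_nonneg hasDerivAt_wideGap hB (by simp [wideGap_zero]) ?_ hx
  intro y hy
  rw [div_le_div_iff₀ (one_add_add_sq_div_two_pos y) (by positivity)]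
  nlinarith [mul_le_mul_of_nonneg_left (one_add_sqrt_two_mul_le y) hy]

lemma wideGap_le_cube {x : ℝ} (hx : 0 ≤ x) : wideGap x ≤ x ^ 3 / 6 := by
  have hB (y : ℝ) : HasDerivAt (fun y : ℝ => y ^ 3 / 6) (y ^ 2 / 2) y := by
    exact ((hasDerivAt_pow 3 y).div_const 6).congr_deriv (by ring)
  refine le_of_hasDerivAt_le_of_nonneg hasDerivAt_wideGap hB (by simp [wideGap_zero]) ?_ hx
  intro y hy
  rw [div_le_iff₀ (one_add_add_sq_div_two_pos y)]
  nlinarith [sq_nonneg y, mul_nonneg (sq_nonneg y) hy]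

lemma abs_wideGap_le {x : ℝ} (hx : 0 ≤ x) :
    |wideGap x| ≤ min x (min (x ^ 2 / (4 * (1 + √2))) (x ^ 3 / 6)) := by
  rw [abs_of_nonneg (wideGap_nonneg hx)]
  exact le_min (wideGap_le_self hx) (le_min (wideGap_le_sq hx) (wideGap_le_cube hx))

lemma gFun_of_nonneg {x : ℝ} (hx : 0 ≤ x) : gFun x = wideGap x := by
  rw [gFun, if_pos hx, wideGap]

lemma gFun_of_neg {x : ℝ} (hx : x < 0) : gFun x = -wideGap (-x) := by
  rw [gFun, if_neg hx.not_ge, wideGap]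
  ring_nf

theorem stmt_13 (x : ℝ) :
    |gFun x| ≤ min |x| (min (x ^ 2 / (4 * (1 + Real.sqrt 2))) (|x| ^ 3 / 6)) := by
  rcases le_or_gt 0 x with hx | hx
  · rw [gFun_of_nonneg hx, abs_of_nonneg hx]
    exact abs_wideGap_le hx
  · rw [gFun_of_neg hx, abs_neg, abs_of_neg hx, ← neg_sq x]
    exact abs_wideGap_le (neg_nonneg.mpr hx.le)
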